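/- arXiv:1802.03428 — 2 statements merged into one kernel-verified Lean document; each statement's English description precedes it below -/
import Mathlib

section
/- Consider a root-biased nonbacktracking random walk on T_d^k starting from a leaf, where k ≥ 2. For any integer t with k+2 ≤ t ≤ d^k, the walk visits the root within its first t steps with probability at least (t − k − 2)·d^{−k}/4. -/
open MeasureTheory ProbabilityTheory ENNReal
open scoped ENat Classical

namespace Frog

/-- A vertex of the full rooted `d`-ary tree of height `n`, encoded as the list
of child choices leading from the vertex back up to the root (most recent
choice first); the root is the empty list. -/
def Vtx (d n : ℕ) : Type := {l : List (Fin d) // l.length ≤ n}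

instance (d n : ℕ) : MeasurableSpace (Vtx d n) := ⊤

/-- The root of `T_d^n`. -/
def root (d n : ℕ) : Vtx d n := ⟨[], Nat.zero_le n⟩

/-- `v` is a child of `u` in `T_d^n`. -/
def IsChild {d n : ℕ} (u v : Vtx d n) : Prop := ∃ a : Fin d, v.1 = a :: u.1

/-- Adjacency in `T_d^n`. -/
def Adj {d n : ℕ} (u v : Vtx d n) : Prop := IsChild u v ∨ IsChild v u

/-- The level (distance from the root) of a vertex of `T_d^n`. -/
def level {d n : ℕ} (v : Vtx d n) : ℕ := v.1.length

/-- The degree (number of neighbours) of a vertex of `T_d^n`. -/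
def deg {d n : ℕ} (v : Vtx d n) : ℕ :=
  (if v.1.length < n then d else 0) + (if v.1 = [] then 0 else 1)

/-- The ancestor of `v` at distance `k` above it (the root if `k` exceeds the
level of `v`). -/
def anc {d n : ℕ} (v : Vtx d n) (k : ℕ) : Vtx d n :=
  ⟨v.1.drop k, by rw [List.length_drop]; exact le_trans (Nat.sub_le _ _) v.2⟩

/-! ### The tree `T_d^{H*}`: `T_d^H` with an extra vertex `y` attached to the root -/

/-- A vertex of `T_d^{H*}`: either the extra vertex `y` (encoded as `none`) or a
vertex of `T_d^H`. -/
def VtxS (d H : ℕ) : Type := Option (Vtx d H)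

instance (d H : ℕ) : MeasurableSpace (VtxS d H) := ⊤

/-- The root of `T_d^{H*}`. -/
def rootS (d H : ℕ) : VtxS d H := some (root d H)

/-- The extra vertex `y` of `T_d^{H*}`, attached to the root. -/
def yS (d H : ℕ) : VtxS d H := none

/-- Adjacency in `T_d^{H*}`. -/
def AdjS {d H : ℕ} (u v : VtxS d H) : Prop :=
  match u, v with
  | none, some w => w = root d H
  | some w, none => w = root d H
  | some u', some v' => Adj u' v'
  | none, none => False

/-- Degrees in `T_d^{H*}`. -/
def degS {d H : ℕ} (v : VtxS d H) : ℕ :=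
  match v with
  | none => 1
  | some u => (if u.1.length < H then d else 0) + 1

/-! ### Simple random walk -/

/-- `X` is a simple random walk under `P` on the graph with adjacency relation
`adj` and vertex degrees `dg`, started at `v`: its finite-dimensional
distributions are those of the nearest-neighbour walk which at each step moves
to a uniformly chosen neighbour of its current position. -/
def IsRW {V : Type*} {Ω : Type*} [MeasurableSpace Ω] (P : Measure Ω)
    (adj : V → V → Prop) (dg : V → ℕ) (X : ℕ → Ω → V) (v : V) : Prop :=
  (∀ (t : ℕ) (A : Set V), MeasurableSet {ω | X t ω ∈ A}) ∧
  ∀ (t : ℕ) (p : ℕ → V),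
    P {ω | ∀ j ≤ t, X j ω = p j} =
      (if p 0 = v then 1 else 0) *
        ∏ j ∈ Finset.range t, (if adj (p j) (p (j + 1)) then ((dg (p j) : ℝ≥0∞))⁻¹ else 0)

/-- The first time at which a trajectory `X` lies in the set `A` (with value
`∞` if this never happens). -/
noncomputable def hitTime {V : Type*} {Ω : Type*} (X : ℕ → Ω → V) (A : Set V) (ω : Ω) :
    ℝ≥0∞ :=
  ⨅ (t : ℕ) (_ : X t ω ∈ A), (t : ℝ≥0∞)

/-! ### The frog model -/

/-- Index type for the random input data of a frog model: a sleeping-frog count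
at a vertex, or the path of one frog. -/
def IdxType (V : Type) : V ⊕ V × ℕ → Type
  | Sum.inl _ => ℕ
  | Sum.inr _ => ℕ → V

instance {V : Type} [MeasurableSpace V] : ∀ x : V ⊕ V × ℕ, MeasurableSpace (IdxType V x)
  | Sum.inl _ => inferInstanceAs (MeasurableSpace ℕ)
  | Sum.inr _ => inferInstanceAs (MeasurableSpace (ℕ → V))

/-- The family of random inputs of a frog model: the counts `η v` and the frog
paths `S v i`. -/
def family {V : Type} {Ω : Type*} (η : V → Ω → ℕ) (S : V → ℕ → ℕ → Ω → V) :
    ∀ x : V ⊕ V × ℕ, Ω → IdxType V x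
  | Sum.inl v => η v
  | Sum.inr p => fun ω t => S p.1 p.2 t ω

/-- The structural hypotheses of a frog model on the graph with adjacency `adj`
and degrees `dg`: frog `i` sleeping at `v` follows (from the moment it is
woken) the path `S v i`, which is a simple random walk started at `v`, and all
the sleeping-frog counts and frog paths are jointly independent. -/
structure IsFrogModel {V : Type} [MeasurableSpace V] {Ω : Type*} [MeasurableSpace Ω]
    (P : Measure Ω) (adj : V → V → Prop) (dg : V → ℕ)
    (η : V → Ω → ℕ) (S : V → ℕ → ℕ → Ω → V) : Prop where
  meas : ∀ v, Measurable (η v)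
  srw : ∀ v i, IsRW P adj dg (S v i) v
  indep : iIndepFun (family η S) P

/-- In a (deterministic realization of a) frog model with sleeping-frog counts
`η` and frog paths `S`, where the initially awake frog is frog `0` at the start
vertex `v₀` (there are no sleeping frogs at `v₀`), `VisitedBy η S v₀ v T` says
that the vertex `v` has been visited by an awake frog within time `T`.  This is
expressed by the existence of a chain of wakings leading from the initial frog
to the vertex `v`. -/
def VisitedBy {V : Type*} (η : V → ℕ) (S : V → ℕ → ℕ → V) (v₀ v : V) (T : ℕ) : Prop :=
  ∃ (k : ℕ) (u : ℕ → V) (i : ℕ → ℕ) (s : ℕ → ℕ),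
    u 0 = v₀ ∧ u k = v ∧ s 0 = 0 ∧ s k ≤ T ∧ i 0 = 0 ∧
    (∀ j, 1 ≤ j → j < k → u j ≠ v₀ ∧ i j < η (u j)) ∧
    ∀ j < k, s j ≤ s (j + 1) ∧ S (u j) (i j) (s (j + 1) - s j) = u (j + 1)

/-- The cover time of a frog model: the first time at which every vertex has
been visited by an awake frog (`∞` if this never happens). -/
noncomputable def coverTime {V : Type*} (η : V → ℕ) (S : V → ℕ → ℕ → V) (v₀ : V) :
    ℝ≥0∞ :=
  ⨅ (T : ℕ) (_ : ∀ v, VisitedBy η S v₀ v T), (T : ℝ≥0∞)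

/-- The time at which the vertex `v` is first visited (and hence the frogs
sleeping there are woken) in a frog model. -/
noncomputable def wakeTime {V : Type*} (η : V → ℕ) (S : V → ℕ → ℕ → V) (v₀ v : V) :
    ℕ∞ :=
  ⨅ (T : ℕ) (_ : VisitedBy η S v₀ v T), (T : ℕ∞)

/-- `X` has the Poisson distribution with mean `μ`. -/
def HasPoisson {Ω : Type*} [MeasurableSpace Ω] (P : Measure Ω) (X : Ω → ℕ) (μ : ℝ) :
    Prop :=
  ∀ k : ℕ, P {ω | X ω = k} = ENNReal.ofReal (Real.exp (-μ) * μ ^ k / k.factorial)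

/-- `X` has the distribution `Ber(μ)`: the unique distribution supported on
`{⌊μ⌋, ⌈μ⌉}` with mean `μ`. -/
def HasBer {Ω : Type*} [MeasurableSpace Ω] (P : Measure Ω) (X : Ω → ℕ) (μ : ℝ) : Prop :=
  P {ω | X ω = ⌊μ⌋₊ ∨ X ω = ⌈μ⌉₊} = 1 ∧ ∫⁻ ω, (X ω : ℝ≥0∞) ∂P = ENNReal.ofReal μ

/-! ### Frog models with freezing -/

/-- The path `p` frozen upon its first arrival in the set `F`. -/
noncomputable def frozenPath {V : Type*} (F : Set V) (p : ℕ → V) : ℕ → V := fun t =>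
  if h : ∃ s, p s ∈ F then p (min t (Nat.find h)) else p t

/-- All frog paths frozen upon arrival in `F`. -/
noncomputable def frozenPaths {V : Type*} (F : Set V) (S : V → ℕ → ℕ → V) :
    V → ℕ → ℕ → V :=
  fun v i => frozenPath F (S v i)

/-- The path `p`, which freezes upon first arrival in `F`, freezes at a point
of `W`. -/
def FreezesIn {V : Type*} (F W : Set V) (p : ℕ → V) : Prop :=
  ∃ t, p t ∈ W ∧ ∀ s < t, p s ∉ F

/-- In the frog model `(η, S)` started at `v₀` in which frogs are frozen upon
arrival in the set `F`, the number of frogs that are eventually woken and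
frozen at a vertex of `W ⊆ F`. -/
noncomputable def frozenCount {V : Type*} (F W : Set V) (η : V → ℕ)
    (S : V → ℕ → ℕ → V) (v₀ : V) : ℝ≥0∞ :=
  ∑' p : V × ℕ,
    if (if p.1 = v₀ then p.2 = 0 else p.2 < η p.1) ∧
        (∃ T, VisitedBy η (frozenPaths F S) v₀ p.1 T) ∧
        FreezesIn F W (S p.1 p.2)
    then 1 else 0

/-- As `frozenCount`, but counting only frogs frozen in `W` by time `T`. -/
noncomputable def frozenCountBy {V : Type*} (F W : Set V) (η : V → ℕ)
    (S : V → ℕ → ℕ → V) (v₀ : V) (T : ℕ) : ℝ≥0∞ :=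
  ∑' p : V × ℕ,
    if (if p.1 = v₀ then p.2 = 0 else p.2 < η p.1) ∧
        ∃ sw t, VisitedBy η (frozenPaths F S) v₀ p.1 sw ∧ sw + t ≤ T ∧
          S p.1 p.2 t ∈ W ∧ ∀ s < t, S p.1 p.2 s ∉ F
    then 1 else 0

/-- The total number of times the vertex `u` is visited by an awake frog during
the time interval `[1, τ]` in the frog model `(η, S)` started at `v₀` (each
frog occupying `u` at a time `1 ≤ t ≤ τ` counts once for each such time). -/
noncomputable def visitCount {V : Type*} (η : V → ℕ) (S : V → ℕ → ℕ → V)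
    (v₀ u : V) (τ : ℕ) : ℝ≥0∞ :=
  (∑' t : ℕ, if 1 ≤ t ∧ t ≤ τ ∧ S v₀ 0 t = u then 1 else 0) +
    ∑' q : V × ℕ × ℕ,
      if q.1 ≠ v₀ ∧ q.2.1 < η q.1 ∧ q.2.2 ≤ τ ∧
          (∃ w : ℕ, (w : ℕ∞) = wakeTime η S v₀ q.1 ∧ w ≤ q.2.2 ∧
            S q.1 q.2.1 (q.2.2 - w) = u)
      then 1 else 0

/-! ### Stopped versions of the frog model -/

/-- The path `p` halted after `m` steps. -/
noncomputable def stopPath {V : Type*} (p : ℕ → V) (m : ℕ∞) : ℕ → V := fun t =>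
  p (ENat.toNat (min (t : ℕ∞) m))

/-- The frog paths of the stopped version of the frog model `(η, S)` in which
frog `(v,i)` is halted `τ v i` steps after it wakes. -/
noncomputable def stoppedS {V Ω : Type*} (S : V → ℕ → ℕ → Ω → V)
    (τ : V → ℕ → Ω → ℕ∞) : V → ℕ → ℕ → Ω → V :=
  fun v i t ω => stopPath (fun s => S v i s ω) (τ v i ω) t

/-- The wake time of the vertex `v` in the stopped version of the frog model
`(η, S)` with stopping rule `τ`. -/
noncomputable def stoppedWake {V Ω : Type*} (η : V → Ω → ℕ) (S : V → ℕ → ℕ → Ω → V)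
    (τ : V → ℕ → Ω → ℕ∞) (v₀ v : V) (ω : Ω) : ℕ∞ :=
  wakeTime (fun u => η u ω) (fun u i t => stoppedS S τ u i t ω) v₀ v

/-- The information revealed by time `t` by a frog-model-like process with wake
times `w`, sleeping-frog counts `η` and frog paths `pos` started at `v₀`: for
each vertex, its wake time truncated at `t+1`; the frog counts at the vertices
visited so far; and the trajectories up to time `t` of the frogs woken so far. -/
noncomputable def history {V Ω : Type*} (v₀ : V) (w : V → Ω → ℕ∞) (η : V → Ω → ℕ)
    (pos : V → ℕ → ℕ → Ω → V) (t : ℕ) (ω : Ω) :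
    (V → ℕ∞) × (V → ℕ) × (V → ℕ → ℕ → Option V) :=
  ⟨fun v => min (w v ω) ((t : ℕ∞) + 1),
   fun v => if w v ω ≤ (t : ℕ∞) then η v ω else 0,
   fun v i s =>
     if (if v = v₀ then i = 0 else i < η v ω) ∧ w v ω + (s : ℕ∞) ≤ (t : ℕ∞)
     then some (pos v i s ω) else none⟩

/-- `τ` defines a *stopped version* of the frog model `(η, S)` started at `v₀`:
frog `(v,i)` is halted `τ v i` steps after it is woken, where the decision to
halt a frog by any given time `t` is determined by the history of the stopped
process up to time `t`. -/
def IsStoppedVersion {V Ω : Type*} (η : V → Ω → ℕ) (S : V → ℕ → ℕ → Ω → V)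
    (v₀ : V) (τ : V → ℕ → Ω → ℕ∞) : Prop :=
  ∀ (v : V) (i : ℕ) (t : ℕ),
    ∃ B : Set ((V → ℕ∞) × (V → ℕ) × (V → ℕ → ℕ → Option V)),
      {ω | stoppedWake η S τ v₀ v ω + τ v i ω ≤ (t : ℕ∞)} =
        (fun ω => history v₀ (stoppedWake η S τ v₀) η (stoppedS S τ) t ω) ⁻¹' B

/-- The number of frogs which, in the stopped version of the frog model
`(η, S)` with stopping rule `τ`, have been halted at the vertex `u` by time
`T`. -/
noncomputable def stoppedAtCount {V Ω : Type*} (η : V → Ω → ℕ)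
    (S : V → ℕ → ℕ → Ω → V) (τ : V → ℕ → Ω → ℕ∞) (v₀ u : V) (T : ℕ) (ω : Ω) :
    ℝ≥0∞ :=
  ∑' p : V × ℕ,
    if (if p.1 = v₀ then p.2 = 0 else p.2 < η p.1 ω) ∧
        ∃ w m : ℕ, (w : ℕ∞) = stoppedWake η S τ v₀ p.1 ω ∧ (m : ℕ∞) = τ p.1 p.2 ω ∧
          w + m ≤ T ∧ S p.1 p.2 m ω = u
    then 1 else 0

/-! ### Root-biased nonbacktracking random walk -/

/-- One-step transition probabilities of the root-biased nonbacktracking random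
walk on `T_d^n`, from `cur` (having arrived from `prev`) to `next`. -/
noncomputable def rbnbStep {d n : ℕ} (prev cur next : Vtx d n) : ℝ≥0∞ :=
  if cur = root d n then
    (if next = prev then ((d : ℝ≥0∞) ^ 2)⁻¹
     else if IsChild cur next then ((d : ℝ≥0∞) + 1) / (d : ℝ≥0∞) ^ 2 else 0)
  else if level cur = n then (if IsChild next cur then 1 else 0)
  else if Adj cur next ∧ next ≠ prev then ((deg cur : ℝ≥0∞) - 1)⁻¹ else 0

/-- `X` is a root-biased nonbacktracking random walk on `T_d^n` started at `v`,
under `P`: the first step is uniform over the neighbours of `v`, and the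
subsequent steps follow the transition probabilities `rbnbStep`. -/
def IsRBNB {d n : ℕ} {Ω : Type*} [MeasurableSpace Ω] (P : Measure Ω)
    (X : ℕ → Ω → Vtx d n) (v : Vtx d n) : Prop :=
  (∀ (t : ℕ) (A : Set (Vtx d n)), MeasurableSet {ω | X t ω ∈ A}) ∧
  ∀ (t : ℕ) (p : ℕ → Vtx d n),
    P {ω | ∀ j ≤ t, X j ω = p j} =
      (if p 0 = v then 1 else 0) *
        ∏ j ∈ Finset.range t,
          (if j = 0 then (if Adj (p 0) (p 1) then ((deg (p 0) : ℝ≥0∞))⁻¹ else 0)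
           else rbnbStep (p (j - 1)) (p j) (p (j + 1)))

end Frog

namespace Frog

/-!
A trajectory from the leaf `v₀` that reaches the root by time `t` can be built from a sequence
of excursions, each climbing `ℓ < k` levels, turning into a sibling subtree and descending to a
new leaf (`2ℓ` steps, probability `d^{-(2ℓ-1)}`), followed by the straight climb to the root
(probability `d^{-(k-1)}`). Distinct sequences give disjoint events, so the probability is at
least `d^{-(k-1)} W(t - k)`, where `W(T)` (`renewalWeight`) sums the excursion probabilities
over the sequences fitting into `T` steps. Splitting off the first excursion gives the renewal
equation `W(T) = 1 + ∑_{r < k-1} (1 - 1/d) d^{-r} W(T - 2(r+1))`, whose weights have total mass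
`1 - d^{-(k-1)}` and give `r + 1` a mean of at most `2`; induction on `T ≤ d^k` then yields
`W(T) ≥ (T - 2)/(4d)`.
-/

open Finset

lemma tsum_list_eq {α : Type*} (f : List α → ℝ≥0∞) :
    ∑' l, f l = f [] + ∑' a, ∑' l, f (a :: l) := by
  let e : Unit ⊕ α × List α ≃ List α :=
    { toFun := Sum.elim (fun _ => []) (fun p => p.1 :: p.2)
      invFun := fun | [] => .inl () | a :: l => .inr (a, l)
      left_inv := by rintro (_ | _) <;> rfl
      right_inv := by rintro (_ | _) <;> rfl }
  rw [← e.tsum_eq, ENNReal.summable.tsum_sum ENNReal.summable, tsum_fintype, Fintype.sum_unique,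
    ENNReal.tsum_prod']
  rfl

lemma tsum_measure_cylinder_le {V Ω ι : Type*} [MeasurableSpace Ω] [Countable ι] {P : Measure Ω}
    {X : ℕ → Ω → V} (hX : ∀ (t : ℕ) (A : Set V), MeasurableSet {ω | X t ω ∈ A})
    {p : ι → ℕ → V} {m : ι → ℕ} (hp : Pairwise fun i i' => ∃ j ≤ m i, j ≤ m i' ∧ p i j ≠ p i' j)
    {A : Set Ω} (hA : ∀ i, {ω | ∀ j ≤ m i, X j ω = p i j} ⊆ A) :
    ∑' i, P {ω | ∀ j ≤ m i, X j ω = p i j} ≤ P A := by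
  rw [← measure_iUnion]
  · exact measure_mono (Set.iUnion_subset hA)
  · intro i i' hii'
    obtain ⟨j, hj, hj', hne⟩ := hp hii'
    exact Set.disjoint_left.mpr fun ω hω hω' => hne ((hω j hj).symm.trans (hω' j hj'))
  · intro i
    simp only [Set.ofPred_forall]
    exact .iInter fun j => .iInter fun _ => hX j {p i j}

lemma sum_succ_mul_geom_eq (x : ℝ) (m : ℕ) :
    ∑ r ∈ range m, ((r : ℝ) + 1) * ((1 - x) * x ^ r) = ∑ r ∈ range m, x ^ r - m * x ^ m := by
  induction m with
  | zero => simp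
  | succ m ih => rw [sum_range_succ, ih, sum_range_succ]; push_cast; ring

lemma sum_succ_mul_geom_le {x : ℝ} (hx₀ : 0 ≤ x) (hx : x ≤ 1 / 2) (m : ℕ) :
    ∑ r ∈ range m, ((r : ℝ) + 1) * ((1 - x) * x ^ r) ≤ 2 := by
  have hgeom : ∑ r ∈ range m, x ^ r ≤ 1 / (1 - x) := by
    simpa using geom_sum_Ico_le_of_lt_one (m := 0) (n := m) hx₀ (by linarith)
  have h2 : 1 / (1 - x) ≤ 2 := by rw [div_le_iff₀ (by linarith)]; linarith
  rw [sum_succ_mul_geom_eq]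
  nlinarith [pow_nonneg hx₀ m, (m.cast_nonneg : (0 : ℝ) ≤ m)]

lemma le_renewal_step {x T : ℝ} (hx₀ : 0 ≤ x) (hx : x ≤ 1 / 2) (m : ℕ) (hT : T * x ^ (m + 1) ≤ 1) :
    (T - 2) * x / 4 ≤ 1 + ∑ r ∈ range m, (1 - x) * x ^ r * ((T - 2 * (r + 1) - 2) * x / 4) := by
  have hmass : ∑ r ∈ range m, (1 - x) * x ^ r = 1 - x ^ m := by
    rw [← mul_sum, mul_neg_geom_sum]
  have hmean := sum_succ_mul_geom_le hx₀ hx m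
  have hsplit : ∑ r ∈ range m, (1 - x) * x ^ r * ((T - 2 * (r + 1) - 2) * x / 4) =
      (T - 2) * x / 4 * ∑ r ∈ range m, (1 - x) * x ^ r -
        x / 2 * ∑ r ∈ range m, ((r : ℝ) + 1) * ((1 - x) * x ^ r) := by
    rw [mul_sum, mul_sum, ← sum_sub_distrib]
    exact sum_congr rfl fun r _ => by ring
  rw [hsplit, hmass]
  rw [pow_succ] at hT
  nlinarith [pow_nonneg hx₀ m, mul_nonneg hx₀ (pow_nonneg hx₀ m)]

lemma inv_natCast_pow_eq_ofReal {d : ℕ} (hd : d ≠ 0) (m : ℕ) :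
    (d : ℝ≥0∞)⁻¹ ^ m = ENNReal.ofReal ((d : ℝ)⁻¹ ^ m) := by
  rw [ENNReal.ofReal_pow (by positivity), ENNReal.ofReal_inv_of_pos (by positivity),
    ENNReal.ofReal_natCast]

lemma natCast_mul_inv_pow_eq_ofReal {d : ℕ} (hd : d ≠ 0) (r : ℕ) :
    (((d - 1) * d ^ r : ℕ) : ℝ≥0∞) * (d : ℝ≥0∞)⁻¹ ^ (2 * r + 1) =
      ENNReal.ofReal ((1 - (d : ℝ)⁻¹) * (d : ℝ)⁻¹ ^ r) := by
  rw [← ENNReal.ofReal_natCast, inv_natCast_pow_eq_ofReal hd, ← ENNReal.ofReal_mul (by positivity)]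
  congr 1
  push_cast [Nat.cast_sub (Nat.one_le_iff_ne_zero.mpr hd), inv_pow]
  field_simp
  ring

section Tree

variable {d n : ℕ}

lemma anc_zero (v : Vtx d n) : anc v 0 = v := rfl

lemma level_anc (v : Vtx d n) (m : ℕ) : level (anc v m) = level v - m :=
  List.length_drop

lemma isChild_anc_succ (v : Vtx d n) {m : ℕ} (hm : m < level v) :
    IsChild (anc v (m + 1)) (anc v m) :=
  ⟨v.1[m], List.drop_eq_getElem_cons hm⟩

lemma ne_of_level_ne {u v : Vtx d n} (h : level u ≠ level v) : u ≠ v :=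
  fun huv => h (huv ▸ rfl)

lemma ne_root_of_level_ne_zero {v : Vtx d n} (h : level v ≠ 0) : v ≠ root d n :=
  ne_of_level_ne h

lemma deg_of_level_eq {v : Vtx d n} (hn : n ≠ 0) (hv : level v = n) : deg v = 1 := by
  have hnil : v.1 ≠ [] := fun h => hn (by rw [← hv, level, h, List.length_nil])
  simp [deg, hnil, show v.1.length = n from hv]

lemma rbnbStep_of_internal {prev cur next : Vtx d n} (h0 : level cur ≠ 0) (hn : level cur < n)
    (hadj : Adj cur next) (hne : next ≠ prev) : rbnbStep prev cur next = (d : ℝ≥0∞)⁻¹ := by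
  have hdeg : deg cur = d + 1 := by
    have hnil : cur.1 ≠ [] := fun h => h0 (by rw [level, h, List.length_nil])
    simp [deg, hnil, show cur.1.length < n from hn]
  rw [rbnbStep, if_neg (ne_root_of_level_ne_zero h0), if_neg hn.ne, if_pos ⟨hadj, hne⟩, hdeg]
  norm_num

lemma rbnbStep_of_level_eq {prev cur next : Vtx d n} (hn : n ≠ 0) (hcur : level cur = n)
    (hnext : IsChild next cur) : rbnbStep prev cur next = 1 := by
  rw [rbnbStep, if_neg (ne_root_of_level_ne_zero (by omega)), if_pos hcur, if_pos hnext]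

lemma rbnbStep_anc_up {v : Vtx d n} (hv : level v = n) {j : ℕ} (hj : j + 2 ≤ n) :
    rbnbStep (anc v j) (anc v (j + 1)) (anc v (j + 2)) = (d : ℝ≥0∞)⁻¹ := by
  refine rbnbStep_of_internal ?_ ?_ (.inr (isChild_anc_succ v ?_)) (ne_of_level_ne ?_) <;>
    simp only [level_anc, hv] <;> omega

lemma rbnbStep_anc_down {v : Vtx d n} (hv : level v = n) {j : ℕ} (hj : j + 2 ≤ n) :
    rbnbStep (anc v (j + 2)) (anc v (j + 1)) (anc v j) = (d : ℝ≥0∞)⁻¹ := by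
  refine rbnbStep_of_internal ?_ ?_ (.inl (isChild_anc_succ v ?_)) (ne_of_level_ne ?_) <;>
    simp only [level_anc, hv] <;> omega

end Tree

/-- The `b`-th element of `Fin d` other than `x`; an analogue of `Fin.succAbove`. -/
def skip {d : ℕ} (x : Fin d) (b : Fin (d - 1)) : Fin d :=
  if b.1 < x.1 then ⟨b, by omega⟩ else ⟨b + 1, by omega⟩

lemma skip_ne {d : ℕ} (x : Fin d) (b : Fin (d - 1)) : skip x b ≠ x := by
  unfold skip; split <;> simp [Fin.ext_iff] <;> omega

lemma skip_injective {d : ℕ} (x : Fin d) : Function.Injective (skip x) := by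
  intro b b' h
  unfold skip at h
  split at h <;> split at h <;> simp [Fin.ext_iff] at h <;> omega

/-- An excursion from a leaf `v` of `T_d^n`: climb `r + 1` levels, step down into one of the
`d - 1` other children (chosen by the `Fin (d - 1)` component), then descend to a leaf along
the `r` child choices of the last component. -/
abbrev Excursion (d n : ℕ) : Type := Σ r : Fin (n - 1), Fin (d - 1) × (Fin r → Fin d)

namespace Excursion

variable {d n : ℕ}

def height (e : Excursion d n) : ℕ := e.1 + 1

/-- The excursion has probability `d⁻¹ ^ cost`: of its `2 * height` steps, only the one out
of the leaf is forced. -/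
def cost (e : Excursion d n) : ℕ := 2 * e.1 + 1

lemma height_pos (e : Excursion d n) : 0 < e.height := Nat.succ_pos _

lemma height_lt (e : Excursion d n) : e.height < n := by
  have := e.1.2; unfold height; omega

lemma two_mul_height (e : Excursion d n) : 2 * e.height = e.cost + 1 := by
  unfold height cost; ring

/-- The leaf at which the excursion `e` from the leaf `v` ends (the default of `getD` only
matters when `v` is not a leaf). -/
def target (v : Vtx d n) (e : Excursion d n) : Vtx d n :=
  ⟨List.ofFn e.2.2 ++
      skip (v.1.getD e.1 (Fin.castLE (d.sub_le 1) e.2.1)) e.2.1 :: v.1.drop e.height,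
    by have := v.2; have := e.height_lt; simp [height]; omega⟩

variable {v : Vtx d n}

lemma level_target (hv : level v = n) (e : Excursion d n) : level (e.target v) = n := by
  have := e.height_lt
  simp only [level, target, List.length_append, List.length_ofFn, List.length_cons,
    List.length_drop] at hv ⊢
  unfold height; omega

lemma anc_target_fst (e : Excursion d n) :
    (anc (e.target v) e.1).1 =
      skip (v.1.getD e.1 (Fin.castLE (d.sub_le 1) e.2.1)) e.2.1 :: v.1.drop e.height :=
  List.drop_left' (List.length_ofFn ..)

lemma anc_target_height (e : Excursion d n) : anc (e.target v) e.height = anc v e.height := by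
  apply Subtype.ext
  change (e.target v).1.drop (e.1 + 1) = _
  rw [← List.tail_drop]
  change (anc (e.target v) e.1).1.tail = _
  rw [anc_target_fst]
  rfl

lemma isChild_anc_target (e : Excursion d n) :
    IsChild (anc v e.height) (anc (e.target v) e.1) :=
  ⟨_, anc_target_fst e⟩

lemma anc_target_ne (hv : level v = n) (e : Excursion d n) :
    anc (e.target v) e.1 ≠ anc v e.1 := by
  have hr : e.1 < v.1.length := by
    have := e.height_lt; unfold height at this; rw [← level, hv]; omega
  intro h
  have h' : _ = v.1.drop e.1 := congrArg Subtype.val h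
  rw [anc_target_fst, List.drop_eq_getElem_cons hr, List.getD_eq_getElem _ _ hr] at h'
  exact skip_ne _ _ (List.head_eq_of_cons_eq h')

lemma target_inj (hv : level v = n) {e e' : Excursion d n} (hh : e.height = e'.height)
    (h : e.target v = e'.target v) : e = e' := by
  obtain ⟨r, b, c⟩ := e
  obtain ⟨r', b', c'⟩ := e'
  obtain rfl : r = r' := Fin.ext (by simpa [height] using hh)
  have hr : (r : ℕ) < v.1.length := by have := r.2; rw [← level, hv]; omega
  obtain ⟨hc, hb⟩ := List.append_inj (congrArg Subtype.val h) (by simp)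
  rw [List.getD_eq_getElem _ _ hr, List.getD_eq_getElem _ _ hr] at hb
  obtain rfl := skip_injective _ (List.head_eq_of_cons_eq hb)
  obtain rfl := List.ofFn_injective hc
  rfl

lemma rbnbStep_turn (hv : level v = n) (e : Excursion d n) :
    rbnbStep (anc v e.1) (anc v e.height) (anc (e.target v) e.1) = (d : ℝ≥0∞)⁻¹ := by
  have := e.height_lt
  refine rbnbStep_of_internal ?_ ?_ (.inl (isChild_anc_target e)) (anc_target_ne hv e) <;>
    rw [level_anc, hv] <;> unfold height at * <;> omega

end Excursion

section ExcursionPath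

variable {d n : ℕ}

open Excursion

/-- The trajectory from `v` that performs the excursions `es` in turn and then climbs to the
root. -/
def excursionPath : Vtx d n → List (Excursion d n) → ℕ → Vtx d n
  | v, [], j => anc v j
  | v, e :: es, j =>
    if j ≤ e.height then anc v j
    else if j ≤ 2 * e.height then anc (e.target v) (2 * e.height - j)
    else excursionPath (e.target v) es (j - 2 * e.height)

def totalHeight (es : List (Excursion d n)) : ℕ := (es.map height).sum

def totalCost (es : List (Excursion d n)) : ℕ := (es.map cost).sum

def duration (es : List (Excursion d n)) : ℕ := n + 2 * totalHeight es

def firstTurn : List (Excursion d n) → ℕ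
  | [] => n
  | e :: _ => e.height

lemma firstTurn_le (es : List (Excursion d n)) : firstTurn es ≤ n := by
  cases es with
  | nil => rfl
  | cons e _ => exact e.height_lt.le

lemma firstTurn_pos (hn : n ≠ 0) (es : List (Excursion d n)) : 0 < firstTurn es := by
  cases es with
  | nil => exact Nat.pos_of_ne_zero hn
  | cons e _ => exact e.height_pos

lemma totalHeight_cons (e : Excursion d n) (es : List (Excursion d n)) :
    totalHeight (e :: es) = e.height + totalHeight es := by
  simp [totalHeight]

lemma totalCost_cons (e : Excursion d n) (es : List (Excursion d n)) :
    totalCost (e :: es) = e.cost + totalCost es := by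
  simp [totalCost]

lemma duration_cons (e : Excursion d n) (es : List (Excursion d n)) :
    duration (e :: es) = 2 * e.height + duration es := by
  rw [duration, duration, totalHeight_cons]; ring

variable {v : Vtx d n}

lemma excursionPath_of_le_firstTurn {es : List (Excursion d n)} {j : ℕ} (hj : j ≤ firstTurn es) :
    excursionPath v es j = anc v j := by
  cases es with
  | nil => rfl
  | cons e es => exact if_pos hj

lemma excursionPath_zero (es : List (Excursion d n)) : excursionPath v es 0 = v :=
  excursionPath_of_le_firstTurn (Nat.zero_le _)

lemma excursionPath_cons_of_height_le {e : Excursion d n} {es : List (Excursion d n)} {j : ℕ}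
    (h₁ : e.height ≤ j) (h₂ : j ≤ 2 * e.height) :
    excursionPath v (e :: es) j = anc (e.target v) (2 * e.height - j) := by
  rcases h₁.eq_or_lt with rfl | h₁
  · rw [excursionPath_of_le_firstTurn (es := e :: es) (j := e.height) le_rfl,
      show 2 * e.height - e.height = e.height by omega, anc_target_height]
  · exact (if_neg h₁.not_ge).trans (if_pos h₂)

lemma excursionPath_cons_add (e : Excursion d n) (es : List (Excursion d n)) (j : ℕ) :
    excursionPath v (e :: es) (2 * e.height + j) = excursionPath (e.target v) es j := by
  rcases j.eq_zero_or_pos with rfl | hj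
  · rw [Nat.add_zero, excursionPath_cons_of_height_le (by omega) le_rfl, excursionPath_zero,
      Nat.sub_self, anc_zero]
  · have := e.height_pos
    rw [excursionPath, if_neg (by omega), if_neg (by omega), Nat.add_sub_cancel_left]

lemma excursionPath_duration (hv : level v = n) (es : List (Excursion d n)) :
    excursionPath v es (duration es) = root d n := by
  induction es generalizing v with
  | nil => exact Subtype.ext (List.drop_of_length_le hv.le)
  | cons e es ih => rw [duration_cons, excursionPath_cons_add, ih (level_target hv e)]

lemma exists_ne_excursionPath_of_firstTurn_lt (hv : level v = n) {es es' : List (Excursion d n)}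
    (h : firstTurn es < firstTurn es') :
    ∃ j ≤ duration es, j ≤ duration es' ∧ excursionPath v es j ≠ excursionPath v es' j := by
  obtain _ | ⟨e, es⟩ := es
  · exact absurd (firstTurn_le es') h.not_ge
  change e.height < firstTurn es' at h
  have := e.height_pos
  have := firstTurn_le es'
  refine ⟨e.height + 1, by rw [duration_cons]; unfold duration; omega,
    by unfold duration; omega, ne_of_level_ne ?_⟩
  rw [excursionPath_cons_of_height_le (by omega) (by omega), excursionPath_of_le_firstTurn h,
    level_anc, level_anc, level_target hv, hv]
  omega

lemma exists_ne_excursionPath (hv : level v = n) {es es' : List (Excursion d n)} (h : es ≠ es') :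
    ∃ j ≤ duration es, j ≤ duration es' ∧ excursionPath v es j ≠ excursionPath v es' j := by
  induction es generalizing v es' with
  | nil =>
    obtain _ | ⟨e', _⟩ := es'
    · exact absurd rfl h
    · obtain ⟨j, hj, hj', hne⟩ := exists_ne_excursionPath_of_firstTurn_lt hv
        (es := e' :: _) (es' := []) e'.height_lt
      exact ⟨j, hj', hj, hne.symm⟩
  | cons e es ih =>
    rcases lt_trichotomy (firstTurn (e :: es)) (firstTurn es') with hlt | heq | hgt
    · exact exists_ne_excursionPath_of_firstTurn_lt hv hlt
    · obtain _ | ⟨e', es'⟩ := es'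
      · exact absurd heq e.height_lt.ne
      change e.height = e'.height at heq
      by_cases hee : e = e'
      · subst hee
        obtain ⟨j, hj, hj', hne⟩ := ih (level_target hv e) (fun h' => h (h' ▸ rfl))
        refine ⟨2 * e.height + j, ?_, ?_, ?_⟩
        · rw [duration_cons]; omega
        · rw [duration_cons]; omega
        · rwa [excursionPath_cons_add, excursionPath_cons_add]
      · refine ⟨2 * e.height, ?_, ?_, ?_⟩
        · rw [duration_cons]; omega
        · rw [duration_cons]; omega
        · rw [← add_zero (2 * e.height), excursionPath_cons_add, heq, excursionPath_cons_add,
            excursionPath_zero, excursionPath_zero]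
          exact fun h' => hee (target_inj hv heq h')
    · obtain ⟨j, hj, hj', hne⟩ := exists_ne_excursionPath_of_firstTurn_lt hv hgt
      exact ⟨j, hj', hj, hne.symm⟩

end ExcursionPath

section Weight

variable {d n : ℕ} {v : Vtx d n}

open Excursion

lemma rbnbStep_excursionPath_cons (hv : level v = n) (e : Excursion d n)
    (es : List (Excursion d n)) {j : ℕ} (hj : j < e.cost) :
    rbnbStep (excursionPath v (e :: es) j) (excursionPath v (e :: es) (j + 1))
      (excursionPath v (e :: es) (j + 2)) = (d : ℝ≥0∞)⁻¹ := by
  have := e.height_lt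
  have := e.two_mul_height
  have hh : e.height = e.1 + 1 := rfl
  rcases lt_trichotomy j e.1 with hj' | rfl | hj'
  · rw [excursionPath_of_le_firstTurn (by change j ≤ e.height; omega),
      excursionPath_of_le_firstTurn (by change j + 1 ≤ e.height; omega),
      excursionPath_of_le_firstTurn (by change j + 2 ≤ e.height; omega)]
    exact rbnbStep_anc_up hv (by omega)
  · rw [excursionPath_of_le_firstTurn (by change (e.1 : ℕ) ≤ e.height; omega),
      excursionPath_of_le_firstTurn (by change (e.1 : ℕ) + 1 ≤ e.height; omega),
      excursionPath_cons_of_height_le (by omega) (by omega),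
      show 2 * e.height - (e.1 + 2) = e.1 by omega]
    exact rbnbStep_turn hv e
  · obtain ⟨i, hi⟩ : ∃ i, 2 * e.height = j + 2 + i := ⟨2 * e.height - (j + 2), by omega⟩
    rw [excursionPath_cons_of_height_le (by omega) (by omega),
      excursionPath_cons_of_height_le (by omega) (by omega),
      excursionPath_cons_of_height_le (by omega) (by omega),
      show 2 * e.height - j = i + 2 by omega, show 2 * e.height - (j + 1) = i + 1 by omega,
      show 2 * e.height - (j + 2) = i by omega]
    exact rbnbStep_anc_down (level_target hv e) (by omega)

lemma prod_rbnbStep_excursionPath_cons (hv : level v = n) (e : Excursion d n)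
    (es : List (Excursion d n)) :
    ∏ j ∈ range (2 * e.height), rbnbStep (excursionPath v (e :: es) j)
      (excursionPath v (e :: es) (j + 1)) (excursionPath v (e :: es) (j + 2)) =
      (d : ℝ≥0∞)⁻¹ ^ e.cost := by
  have hn : n ≠ 0 := by have := e.height_lt; omega
  have hleaf : excursionPath v (e :: es) (e.cost + 1) = e.target v := by
    rw [← two_mul_height, ← add_zero (2 * e.height), excursionPath_cons_add, excursionPath_zero]
  have hparent : excursionPath v (e :: es) (e.cost + 2) = anc (e.target v) 1 := by
    rw [show e.cost + 2 = 2 * e.height + 1 by rw [two_mul_height], excursionPath_cons_add,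
      excursionPath_of_le_firstTurn (firstTurn_pos hn es)]
  have hstep : rbnbStep (excursionPath v (e :: es) e.cost) (excursionPath v (e :: es) (e.cost + 1))
      (excursionPath v (e :: es) (e.cost + 2)) = 1 := by
    rw [hleaf, hparent]
    refine rbnbStep_of_level_eq hn (level_target hv e) ?_
    exact isChild_anc_succ (e.target v) (m := 0) (by rw [level_target hv e]; omega)
  rw [e.two_mul_height, prod_range_succ, hstep, mul_one,
    prod_congr rfl fun j hj => rbnbStep_excursionPath_cons hv e es (mem_range.mp hj),
    prod_const, card_range]

lemma prod_rbnbStep_excursionPath (hn : n ≠ 0) (hv : level v = n) (es : List (Excursion d n)) :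
    ∏ j ∈ range (duration es - 1), rbnbStep (excursionPath v es j) (excursionPath v es (j + 1))
      (excursionPath v es (j + 2)) = (d : ℝ≥0∞)⁻¹ ^ (n - 1 + totalCost es) := by
  induction es generalizing v with
  | nil =>
    refine (prod_congr rfl fun j hj => rbnbStep_anc_up hv ?_).trans ?_
    · simp [duration, totalHeight] at hj; omega
    · simp [duration, totalHeight, totalCost]
  | cons e es ih =>
    have hsplit : duration (e :: es) - 1 = 2 * e.height + (duration es - 1) := by
      rw [duration_cons]; unfold duration; omega
    have htail := ih (level_target hv e)
    simp only [← excursionPath_cons_add (v := v) e es, ← add_assoc] at htail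
    rw [hsplit, prod_range_add, prod_rbnbStep_excursionPath_cons hv, htail, ← pow_add,
      totalCost_cons]
    ring_nf

lemma measure_excursionPath_cylinder {Ω : Type*} [MeasurableSpace Ω] {P : Measure Ω}
    {X : ℕ → Ω → Vtx d n} (hX : IsRBNB P X v) (hn : n ≠ 0) (hv : level v = n)
    (es : List (Excursion d n)) :
    P {ω | ∀ j ≤ duration es, X j ω = excursionPath v es j} =
      (d : ℝ≥0∞)⁻¹ ^ (n - 1) * (d : ℝ≥0∞)⁻¹ ^ totalCost es := by
  have hfirst : excursionPath v es 1 = anc v 1 :=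
    excursionPath_of_le_firstTurn (firstTurn_pos hn es)
  have hadj : Adj v (anc v 1) := .inr (isChild_anc_succ v (by omega))
  obtain ⟨m, hm⟩ : ∃ m, duration es = m + 1 := ⟨duration es - 1, by unfold duration; omega⟩
  rw [hX.2, excursionPath_zero, if_pos rfl, one_mul, hm, prod_range_succ', if_pos rfl, hfirst,
    if_pos hadj, deg_of_level_eq hn hv, Nat.cast_one, inv_one, mul_one, ← pow_add,
    ← prod_rbnbStep_excursionPath hn hv es, hm, Nat.add_sub_cancel]
  exact prod_congr rfl fun j _ => if_neg j.succ_ne_zero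

end Weight

section Renewal

variable {d n : ℕ}

open Excursion

noncomputable def renewalWeight (d n T : ℕ) : ℝ≥0∞ :=
  ∑' es : {es : List (Excursion d n) | 2 * totalHeight es ≤ T}, (d : ℝ≥0∞)⁻¹ ^ totalCost es.1

lemma renewalWeight_eq_tsum (T : ℕ) : renewalWeight d n T =
    ∑' es : List (Excursion d n),
      if 2 * totalHeight es ≤ T then (d : ℝ≥0∞)⁻¹ ^ totalCost es else 0 := by
  refine (_root_.tsum_subtype {es : List (Excursion d n) | 2 * totalHeight es ≤ T}
    fun es => (d : ℝ≥0∞)⁻¹ ^ totalCost es).trans ?_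
  simp only [Set.indicator_apply, Set.mem_ofPred_eq]

lemma renewalWeight_eq (T : ℕ) : renewalWeight d n T =
    1 + ∑ r ∈ range (n - 1), (((d - 1) * d ^ r : ℕ) : ℝ≥0∞) * (d : ℝ≥0∞)⁻¹ ^ (2 * r + 1) *
      if 2 * (r + 1) ≤ T then renewalWeight d n (T - 2 * (r + 1)) else 0 := by
  have hcons (e : Excursion d n) : ∑' es, (if 2 * totalHeight (e :: es) ≤ T
      then (d : ℝ≥0∞)⁻¹ ^ totalCost (e :: es) else 0) =
      (d : ℝ≥0∞)⁻¹ ^ e.cost *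
        if 2 * e.height ≤ T then renewalWeight d n (T - 2 * e.height) else 0 := by
    simp only [totalHeight_cons, totalCost_cons, pow_add]
    split_ifs with h
    · rw [renewalWeight_eq_tsum, ← ENNReal.tsum_mul_left]
      refine tsum_congr fun es => ?_
      by_cases hes : 2 * totalHeight es ≤ T - 2 * e.height
      · rw [if_pos (by omega), if_pos hes]
      · rw [if_neg (by omega), if_neg hes, mul_zero]
    · rw [mul_zero]
      exact ENNReal.tsum_eq_zero.mpr fun es => if_neg (by omega)
  rw [renewalWeight_eq_tsum, tsum_list_eq]
  simp only [hcons, tsum_fintype, Fintype.sum_sigma]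
  congr 1
  · simp [totalHeight, totalCost]
  rw [← Fin.sum_univ_eq_sum_range]
  refine sum_congr rfl fun r _ => ?_
  refine (sum_const ((d : ℝ≥0∞)⁻¹ ^ (2 * (r : ℕ) + 1) *
    if 2 * ((r : ℕ) + 1) ≤ T then renewalWeight d n (T - 2 * ((r : ℕ) + 1)) else 0)).trans ?_
  rw [card_univ, nsmul_eq_mul, ← mul_assoc]
  simp

lemma ofReal_le_renewalWeight {d n : ℕ} (hd : 2 ≤ d) (hn : n ≠ 0) (T : ℕ) (hT : T ≤ d ^ n) :
    ENNReal.ofReal (((T : ℝ) - 2) * (d : ℝ)⁻¹ / 4) ≤ renewalWeight d n T := by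
  induction T using Nat.strong_induction_on with
  | _ T ih =>
  have hx : (d : ℝ)⁻¹ ≤ 1 / 2 := by
    rw [one_div]; exact inv_anti₀ two_pos (by exact_mod_cast hd)
  have hTx : (T : ℝ) * (d : ℝ)⁻¹ ^ (n - 1 + 1) ≤ 1 := by
    rw [Nat.sub_add_cancel (Nat.one_le_iff_ne_zero.mpr hn), inv_pow, ← div_eq_mul_inv,
      div_le_one (by positivity)]
    exact_mod_cast hT
  calc ENNReal.ofReal (((T : ℝ) - 2) * (d : ℝ)⁻¹ / 4)
      ≤ ENNReal.ofReal (1 + ∑ r ∈ range (n - 1), (1 - (d : ℝ)⁻¹) * (d : ℝ)⁻¹ ^ r *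
          (((T : ℝ) - 2 * (r + 1) - 2) * (d : ℝ)⁻¹ / 4)) :=
        ENNReal.ofReal_le_ofReal (le_renewal_step (by positivity) hx _ hTx)
    _ ≤ 1 + ∑ r ∈ range (n - 1), ENNReal.ofReal ((1 - (d : ℝ)⁻¹) * (d : ℝ)⁻¹ ^ r) *
          ENNReal.ofReal (((T : ℝ) - 2 * (r + 1) - 2) * (d : ℝ)⁻¹ / 4) := by
        refine ENNReal.ofReal_add_le.trans ?_
        rw [ENNReal.ofReal_one]
        gcongr
        refine (le_sum_of_subadditive _ ENNReal.ofReal_zero.le (fun _ _ => ENNReal.ofReal_add_le)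
          _ _).trans (sum_le_sum fun r _ => (ENNReal.ofReal_mul ?_).le)
        exact mul_nonneg (by linarith) (by positivity)
    _ ≤ 1 + ∑ r ∈ range (n - 1), (((d - 1) * d ^ r : ℕ) : ℝ≥0∞) * (d : ℝ≥0∞)⁻¹ ^ (2 * r + 1) *
          if 2 * (r + 1) ≤ T then renewalWeight d n (T - 2 * (r + 1)) else 0 := by
        gcongr with r
        · exact (natCast_mul_inv_pow_eq_ofReal (by omega) r).ge
        split_ifs with h
        · refine le_of_eq_of_le ?_ (ih _ (by omega) (by omega))
          rw [Nat.cast_sub h]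
          push_cast
          ring_nf
        · have : (T : ℝ) < 2 * (r + 1) := by exact_mod_cast not_le.mp h
          refine (ENNReal.ofReal_of_nonpos (div_nonpos_of_nonpos_of_nonneg ?_ (by norm_num))).le
          exact mul_nonpos_of_nonpos_of_nonneg (by linarith) (by positivity)
    _ = renewalWeight d n T := (renewalWeight_eq T).symm

lemma ofReal_le_inv_pow_mul_renewalWeight {d n t : ℕ} (hd : 2 ≤ d) (hn : n ≠ 0) (ht : n ≤ t)
    (ht' : t ≤ d ^ n) :
    ENNReal.ofReal (((t : ℝ) - n - 2) * ((d : ℝ) ^ n)⁻¹ / 4) ≤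
      (d : ℝ≥0∞)⁻¹ ^ (n - 1) * renewalWeight d n (t - n) := by
  have hpow : ((d : ℝ) ^ n)⁻¹ = (d : ℝ)⁻¹ ^ (n - 1) * (d : ℝ)⁻¹ := by
    rw [← pow_succ, Nat.sub_add_cancel (by omega), inv_pow]
  have hsplit : ENNReal.ofReal (((t : ℝ) - n - 2) * ((d : ℝ) ^ n)⁻¹ / 4) =
      (d : ℝ≥0∞)⁻¹ ^ (n - 1) * ENNReal.ofReal ((((t - n : ℕ) : ℝ) - 2) * (d : ℝ)⁻¹ / 4) := by
    rw [inv_natCast_pow_eq_ofReal (by omega), ← ENNReal.ofReal_mul (by positivity), hpow,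
      Nat.cast_sub ht]
    ring_nf
  rw [hsplit]
  gcongr
  exact ofReal_le_renewalWeight hd hn _ (by omega)

end Renewal

theorem rbnb_hits_root_general (d k : ℕ) (hd : 2 ≤ d) (hk : 2 ≤ k)
    (t : ℕ) (ht1 : k + 2 ≤ t) (ht2 : t ≤ d ^ k)
    (v0 : Vtx d k) (hleaf : level v0 = k)
    (Ω : Type) (mΩ : MeasurableSpace Ω) (P : Measure Ω)
    (X : ℕ → Ω → Vtx d k) (hX : IsRBNB P X v0) :
    ENNReal.ofReal (((t : ℝ) - k - 2) * ((d : ℝ) ^ k)⁻¹ / 4) ≤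
      P {ω | ∃ s ≤ t, X s ω = root d k} := by
  have hk0 : k ≠ 0 := by omega
  calc ENNReal.ofReal (((t : ℝ) - k - 2) * ((d : ℝ) ^ k)⁻¹ / 4)
      ≤ (d : ℝ≥0∞)⁻¹ ^ (k - 1) * renewalWeight d k (t - k) :=
        ofReal_le_inv_pow_mul_renewalWeight hd hk0 (by omega) ht2
    _ = ∑' es : {es : List (Excursion d k) | 2 * totalHeight es ≤ t - k},
          P {ω | ∀ j ≤ duration es.1, X j ω = excursionPath v0 es.1 j} := by
        rw [renewalWeight, ← ENNReal.tsum_mul_left]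
        exact tsum_congr fun es => (measure_excursionPath_cylinder hX hk0 hleaf es).symm
    _ ≤ P {ω | ∃ s ≤ t, X s ω = root d k} := by
        refine tsum_measure_cylinder_le hX.1
          (fun es es' hne => exists_ne_excursionPath hleaf (Subtype.coe_ne_coe.mpr hne))
          fun es ω hω => ⟨duration es.1, ?_, ?_⟩
        · have := es.2; unfold duration; simp only [Set.mem_ofPred_eq] at this; omega
        · rw [hω _ le_rfl, excursionPath_duration hleaf]

/-- **Hitting the root for the root-biased nonbacktracking walk (Lemma
`lem:root.miss`).**
Consider a root-biased nonbacktracking random walk on `T_d^k` starting from a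
leaf, where `k ≥ 2`.  For any integer `t` with `k+2 ≤ t ≤ d^k`, the walk visits
the root within its first `t` steps with probability at least
`(t − k − 2) d^{−k} / 4`. -/
theorem rbnb_hits_root (d k : ℕ) (hd : 2 ≤ d) (hk : 2 ≤ k)
    (t : ℕ) (ht1 : k + 2 ≤ t) (ht2 : t ≤ d ^ k)
    (v0 : Vtx d k) (hleaf : level v0 = k)
    (Ω : Type) (mΩ : MeasurableSpace Ω) (P : Measure Ω) (hP : IsProbabilityMeasure P)
    (X : ℕ → Ω → Vtx d k) (hX : IsRBNB P X v0) :
    ENNReal.ofReal (((t : ℝ) - k - 2) * ((d : ℝ) ^ k)⁻¹ / 4) ≤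
      P {ω | ∃ s ≤ t, X s ω = root d k} :=
  rbnb_hits_root_general d k hd hk t ht1 ht2 v0 hleaf Ω mΩ P X hX

end Frog
end

section
/- Suppose m balls are placed uniformly and independently into n bins, with m ≥ 3n. Let Z be the number of occupied bins. Then P[Z ≤ 2n/3] ≤ e^{−m/54}. -/
/-!
If at most `2n/3` bins are occupied, the set `T` of occupied bins is one of at most `2^n` sets of
size at most `2n/3`, and every ball lands in `T`. For a fixed such `T` each ball does so with
probability at most `2/3`, independently, so a union bound gives
`P[Z ≤ 2n/3] ≤ 2^n (2/3)^m ≤ ((53/36) (2/3))^m = (53/54)^m ≤ e^{-m/54}`, using `m ≥ 3n` and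
`2 ≤ (53/36)^3`.
-/

open MeasureTheory ProbabilityTheory
open scoped ENNReal

section

variable {Ω β : Type*} {mΩ : MeasurableSpace Ω} {P : Measure Ω}

theorem measure_preimage_finset_le_card_mul {f : Ω → β} {c : ℝ≥0∞}
    (hf : ∀ j, P {ω | f ω = j} = c) (A : Finset β) :
    P (f ⁻¹' A) ≤ A.card * c := by
  calc P (f ⁻¹' A) = P (⋃ j ∈ A, {ω | f ω = j}) := by congr 1; ext ω; simp
    _ ≤ ∑ j ∈ A, P {ω | f ω = j} := measure_biUnion_finset_le _ _
    _ = A.card * c := by simp [hf]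

theorem measure_pred_image_le_sum_forall_mem {ι : Type*} [Fintype ι] [Fintype β] [DecidableEq β]
    (f : ι → Ω → β) (p : Finset β → Prop) [DecidablePred p] :
    P {ω | p (Finset.univ.image fun i => f i ω)} ≤
      ∑ T ∈ Finset.univ.filter p, P {ω | ∀ i, f i ω ∈ T} := by
  calc P {ω | p (Finset.univ.image fun i => f i ω)}
      ≤ P (⋃ T ∈ Finset.univ.filter p, {ω | ∀ i, f i ω ∈ T}) := by
        refine measure_mono fun ω hω => ?_
        simp only [Set.mem_iUnion]
        exact ⟨_, Finset.mem_filter.2 ⟨Finset.mem_univ _, hω⟩, fun i => by simp⟩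
    _ ≤ _ := measure_biUnion_finset_le _ _

theorem ProbabilityTheory.iIndepFun.measure_forall_mem_le {ι : Type*} [Fintype ι]
    [MeasurableSpace β] {f : ι → Ω → β} (hf : iIndepFun f P) {T : Set β}
    (hT : MeasurableSet T) {p : ℝ≥0∞} (hp : ∀ i, P (f i ⁻¹' T) ≤ p) :
    P {ω | ∀ i, f i ω ∈ T} ≤ p ^ Fintype.card ι := by
  calc P {ω | ∀ i, f i ω ∈ T} = P (⋂ i ∈ (Finset.univ : Finset ι), f i ⁻¹' T) := by
        congr 1; ext ω; simp
    _ = ∏ i, P (f i ⁻¹' T) := hf.measure_inter_preimage_eq_mul _ fun _ _ => hT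
    _ ≤ ∏ _i : ι, p := Finset.prod_le_prod' fun i _ => hp i
    _ = p ^ Fintype.card ι := by simp

end

theorem ENNReal.natCast_mul_inv_le_ofReal {k n : ℕ} {c : ℝ} (h : (k : ℝ) ≤ c * n) :
    (k : ℝ≥0∞) * (n : ℝ≥0∞)⁻¹ ≤ ENNReal.ofReal c := by
  rcases Nat.eq_zero_or_pos n with rfl | hn
  · have hk : (k : ℝ) ≤ 0 := by simpa using h
    obtain rfl : k = 0 := by exact_mod_cast hk.antisymm k.cast_nonneg
    simp
  rw [← div_eq_mul_inv, ENNReal.div_le_iff (by positivity) (by simp), ← ENNReal.ofReal_natCast n,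
    ← ENNReal.ofReal_mul' (by positivity), ← ENNReal.ofReal_natCast k]
  exact ENNReal.ofReal_le_ofReal h

theorem two_pow_mul_two_thirds_pow_le_exp {m n : ℕ} (hmn : 3 * n ≤ m) :
    (2 : ℝ) ^ n * (2 / 3) ^ m ≤ Real.exp (-(m : ℝ) / 54) := by
  have h2 : (2 : ℝ) ^ n ≤ (53 / 36) ^ m :=
    calc (2 : ℝ) ^ n ≤ ((53 / 36) ^ 3) ^ n := pow_le_pow_left₀ (by norm_num) (by norm_num) n
      _ = (53 / 36) ^ (3 * n) := by rw [← pow_mul]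
      _ ≤ (53 / 36) ^ m := pow_le_pow_right₀ (by norm_num) hmn
  have h53 : (53 / 54 : ℝ) ≤ Real.exp (-1 / 54) := by
    linarith [Real.add_one_le_exp (-1 / 54 : ℝ)]
  calc (2 : ℝ) ^ n * (2 / 3) ^ m ≤ (53 / 36) ^ m * (2 / 3) ^ m := by gcongr
    _ = (53 / 54) ^ m := by rw [← mul_pow]; norm_num
    _ ≤ Real.exp (-1 / 54) ^ m := by gcongr
    _ = Real.exp (-(m : ℝ) / 54) := by rw [← Real.exp_nat_mul]; ring_nf

theorem balls_in_bins_general (m n : ℕ) (hmn : 3 * n ≤ m)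
    (Ω : Type) (mΩ : MeasurableSpace Ω) (P : Measure Ω)
    (b : Fin m → Ω → Fin n)
    (hunif : ∀ (i : Fin m) (j : Fin n), P {ω | b i ω = j} = ((n : ℝ≥0∞))⁻¹)
    (hindep : iIndepFun b P) :
    P {ω | ((Finset.univ.image fun i => b i ω).card : ℝ) ≤ 2 * n / 3} ≤
      ENNReal.ofReal (Real.exp (-(m : ℝ) / 54)) := by
  let small : Finset (Finset (Fin n)) := Finset.univ.filter fun T => (T.card : ℝ) ≤ 2 * n / 3
  have hsmall : ∀ T ∈ small, P {ω | ∀ i, b i ω ∈ T} ≤ ENNReal.ofReal (2 / 3) ^ m := by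
    intro T hT
    have hcard : (T.card : ℝ) ≤ 2 / 3 * n := by
      have := (Finset.mem_filter.1 hT).2; linarith
    simpa using hindep.measure_forall_mem_le (T := (T : Set (Fin n))) .of_discrete fun i =>
      (measure_preimage_finset_le_card_mul (hunif i) T).trans
        (ENNReal.natCast_mul_inv_le_ofReal hcard)
  have hcount : (small.card : ℝ≥0∞) ≤ 2 ^ n := by
    exact_mod_cast (Finset.card_filter_le _ _).trans (by simp)
  calc _ ≤ ∑ T ∈ small, P {ω | ∀ i, b i ω ∈ T} := measure_pred_image_le_sum_forall_mem b _
    _ ≤ ∑ _T ∈ small, ENNReal.ofReal (2 / 3) ^ m := Finset.sum_le_sum hsmall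
    _ ≤ 2 ^ n * ENNReal.ofReal (2 / 3) ^ m := by rw [Finset.sum_const, nsmul_eq_mul]; gcongr
    _ = ENNReal.ofReal (2 ^ n * (2 / 3) ^ m) := by
      rw [ENNReal.ofReal_mul (by positivity), ENNReal.ofReal_pow (by norm_num),
        ENNReal.ofReal_pow (by norm_num), ENNReal.ofReal_ofNat]
    _ ≤ _ := ENNReal.ofReal_le_ofReal (two_pow_mul_two_thirds_pow_le_exp hmn)

/-- **Balls in bins (Lemma `lem:balls.bins`).**
Suppose `m` balls are placed uniformly and independently into `n` bins, with
`m ≥ 3n`.  Let `Z` be the number of occupied bins.  Then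
`P[Z ≤ 2n/3] ≤ e^{−m/54}`. -/
theorem balls_in_bins (m n : ℕ) (hmn : 3 * n ≤ m)
    (Ω : Type) (mΩ : MeasurableSpace Ω) (P : Measure Ω) (hP : IsProbabilityMeasure P)
    (b : Fin m → Ω → Fin n) (hmeas : ∀ i, Measurable (b i))
    (hunif : ∀ (i : Fin m) (j : Fin n), P {ω | b i ω = j} = ((n : ℝ≥0∞))⁻¹)
    (hindep : iIndepFun b P) :
    P {ω | ((Finset.univ.image fun i => b i ω).card : ℝ) ≤ 2 * n / 3} ≤
      ENNReal.ofReal (Real.exp (-(m : ℝ) / 54)) :=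
  balls_in_bins_general m n hmn Ω mΩ P b hunif hindep
end
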